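/- Let τ be uniform on [T, 2T], σ₀ = 1/2 + 1/log T, and X ≥ 2 with X^{2k} ≤ T^{1/2}. For odd positive integers k, E[(Re Σ_{p ≤ X} p^{-(σ₀+iτ)})^k] = O(X^{2k}/T). -/

import Mathlib

/-!
Write `Re Σ_{p ≤ X} p^{-(σ₀+it)} = Σ_p p^{-σ₀} cos(t log p)` and expand the `k`-th power into
`#P^k` products `∏ᵢ cos(t log pᵢ)`. Each product is `2^{-k} Σ_S cos(t ω_S)` with frequencies
`ω_S = log (∏_{i ∈ S} pᵢ) - log (∏_{i ∉ S} pᵢ)`. For odd `k` these two integers have values of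
`Ω` of different parity, so they differ, and as both are at most `X^k` their logarithms are at
least `X^{-k}` apart. Hence every `∫_T^{2T} cos(t ω_S)` is at most `2 X^k`, and the whole integral is
at most `#P^k · 2 X^k ≤ 2 X^{2k}`.
-/

open Complex Finset ArithmeticFunction
open scoped ArithmeticFunction.Omega

theorem abs_integral_cos_mul_le (a b ω : ℝ) (hω : ω ≠ 0) :
    |∫ t in a..b, Real.cos (t * ω)| ≤ 2 / |ω| := by
  rw [intervalIntegral.integral_comp_mul_right Real.cos hω, integral_cos, smul_eq_mul, abs_mul,
    abs_inv, inv_mul_eq_div]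
  gcongr
  calc |Real.sin (b * ω) - Real.sin (a * ω)| ≤ |Real.sin (b * ω)| + |Real.sin (a * ω)| :=
        abs_sub _ _
    _ ≤ 2 := by linarith [Real.abs_sin_le_one (b * ω), Real.abs_sin_le_one (a * ω)]

theorem cardFactors_prod_of_prime {ι : Type*} (s : Finset ι) {x : ι → ℕ}
    (hx : ∀ i ∈ s, (x i).Prime) : Ω (∏ i ∈ s, x i) = #s := by
  induction s using Finset.cons_induction with
  | empty => simp
  | cons a s ha ih =>
    have hs : ∀ i ∈ s, (x i).Prime := fun i hi => hx i (mem_cons_of_mem hi)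
    have ha : (x a).Prime := hx a (mem_cons_self a s)
    rw [prod_cons, cardFactors_mul ha.ne_zero (prod_ne_zero_iff.mpr fun i hi => (hs i hi).ne_zero),
      cardFactors_apply_prime ha, ih hs, card_cons, add_comm]

theorem one_div_le_abs_log_sub_log {m n : ℕ} (hm : m ≠ 0) (hn : n ≠ 0) (hmn : m ≠ n) {M : ℝ}
    (hmM : m ≤ M) (hnM : n ≤ M) : 1 / M ≤ |Real.log m - Real.log n| := by
  wlog hlt : n < m generalizing m n
  · rw [abs_sub_comm]
    exact this hn hm hmn.symm hnM hmM (lt_of_le_of_ne (not_lt.mp hlt) hmn)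
  have hm0 : (0 : ℝ) < m := by positivity
  have hn0 : (0 : ℝ) < n := by positivity
  have hgap : (n : ℝ) + 1 ≤ m := by exact_mod_cast hlt
  calc 1 / M ≤ 1 / m := one_div_le_one_div_of_le hm0 hmM
    _ ≤ 1 - (m / n : ℝ)⁻¹ := by
        rw [inv_div, le_sub_iff_add_le, ← add_div, div_le_one hm0]; linarith
    _ ≤ Real.log (m / n) := Real.one_sub_inv_le_log_of_pos (by positivity)
    _ = Real.log m - Real.log n := Real.log_div hm0.ne' hn0.ne'
    _ ≤ |Real.log m - Real.log n| := le_abs_self _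

section

variable {ι : Type*} [Fintype ι] [DecidableEq ι]

theorem prod_cos_eq_sum_cos (x : ι → ℝ) :
    ∏ i, Real.cos (x i) =
      (∑ S : Finset ι, Real.cos (∑ i ∈ S, x i - ∑ i ∈ Sᶜ, x i)) / 2 ^ Fintype.card ι := by
  have hexp : ((2 ^ Fintype.card ι * ∏ i, Real.cos (x i) : ℝ) : ℂ) =
      ∑ S : Finset ι, exp ((∑ i ∈ S, x i - ∑ i ∈ Sᶜ, x i : ℝ) * I) := by
    push_cast
    simp only [← Finset.card_univ, ← Finset.prod_const, ← Finset.prod_mul_distrib, two_cos,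
      Fintype.prod_add, ← exp_sum, ← exp_add]
    congr! 2 with S
    simp only [neg_mul, Finset.sum_neg_distrib, ← Finset.sum_mul]
    ring
  rw [eq_div_iff (by positivity), mul_comm, ← ofReal_re (_ * _), hexp, re_sum]
  simp only [exp_ofReal_mul_I_re]

theorem abs_integral_prod_cos_mul_le (ω : ι → ℝ) {δ : ℝ} (hδ : 0 < δ)
    (hω : ∀ S : Finset ι, δ ≤ |∑ i ∈ S, ω i - ∑ i ∈ Sᶜ, ω i|) (a b : ℝ) :
    |∫ t in a..b, ∏ i, Real.cos (t * ω i)| ≤ 2 / δ := by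
  have hω0 (S : Finset ι) : ∑ i ∈ S, ω i - ∑ i ∈ Sᶜ, ω i ≠ 0 :=
    abs_pos.mp (hδ.trans_le (hω S))
  have hint : ∫ t in a..b, ∏ i, Real.cos (t * ω i) =
      (∑ S : Finset ι, ∫ t in a..b, Real.cos (t * (∑ i ∈ S, ω i - ∑ i ∈ Sᶜ, ω i))) /
        2 ^ Fintype.card ι := by
    simp only [prod_cos_eq_sum_cos, mul_sub, Finset.mul_sum]
    rw [intervalIntegral.integral_div, intervalIntegral.integral_finsetSum]
    exact fun S _ => (by fun_prop : Continuous _).intervalIntegrable _ _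
  rw [hint, abs_div, abs_of_pos (a := (2 : ℝ) ^ Fintype.card ι) (by positivity),
    div_le_iff₀ (by positivity)]
  calc |∑ S : Finset ι, ∫ t in a..b, Real.cos (t * (∑ i ∈ S, ω i - ∑ i ∈ Sᶜ, ω i))|
      ≤ ∑ S : Finset ι, |∫ t in a..b, Real.cos (t * (∑ i ∈ S, ω i - ∑ i ∈ Sᶜ, ω i))| :=
        Finset.abs_sum_le_sum_abs _ _
    _ ≤ ∑ _S : Finset ι, 2 / δ := by
        gcongr with S
        exact (abs_integral_cos_mul_le a b _ (hω0 S)).trans (by gcongr; exact hω S)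
    _ = 2 / δ * 2 ^ Fintype.card ι := by simp [Fintype.card_finset, mul_comm]

theorem prod_ne_prod_compl_of_odd_card (hι : Odd (Fintype.card ι)) {x : ι → ℕ}
    (hx : ∀ i, (x i).Prime) (S : Finset ι) :
    ∏ i ∈ S, x i ≠ ∏ i ∈ Sᶜ, x i := by
  intro h
  have hΩ : Ω ((∏ i ∈ S, x i) * ∏ i ∈ Sᶜ, x i) = Fintype.card ι := by
    rw [prod_mul_prod_compl, cardFactors_prod_of_prime _ fun i _ => hx i, card_univ]
  have hS : ∏ i ∈ S, x i ≠ 0 := prod_ne_zero_iff.mpr fun i _ => (hx i).ne_zero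
  rw [← h, cardFactors_mul hS hS] at hΩ
  exact Nat.not_odd_iff_even.mpr (hΩ ▸ Even.add_self _) hι

theorem one_div_pow_le_abs_sum_log_sub_sum_log (hι : Odd (Fintype.card ι)) {x : ι → ℕ}
    (hx : ∀ i, (x i).Prime) {X : ℝ} (hX : 1 ≤ X) (hxX : ∀ i, (x i : ℝ) ≤ X) (S : Finset ι) :
    1 / X ^ Fintype.card ι ≤ |∑ i ∈ S, Real.log (x i) - ∑ i ∈ Sᶜ, Real.log (x i)| := by
  have hlog (s : Finset ι) : ∑ i ∈ s, Real.log (x i) = Real.log (∏ i ∈ s, x i : ℕ) := by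
    push_cast
    exact (Real.log_prod fun i _ => by exact_mod_cast (hx i).ne_zero).symm
  have hle (s : Finset ι) : ((∏ i ∈ s, x i : ℕ) : ℝ) ≤ X ^ Fintype.card ι := by
    push_cast
    calc ∏ i ∈ s, (x i : ℝ) ≤ ∏ _i ∈ s, X :=
          prod_le_prod (fun _ _ => by positivity) fun i _ => hxX i
      _ = X ^ #s := prod_const X
      _ ≤ X ^ Fintype.card ι := pow_le_pow_right₀ hX (card_le_univ s)
  have hne (s : Finset ι) : ∏ i ∈ s, x i ≠ 0 := prod_ne_zero_iff.mpr fun i _ => (hx i).ne_zero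
  rw [hlog, hlog]
  exact one_div_le_abs_log_sub_log (hne S) (hne Sᶜ) (prod_ne_prod_compl_of_odd_card hι hx S)
    (hle S) (hle Sᶜ)

theorem abs_integral_prod_cos_mul_log_le (hι : Odd (Fintype.card ι)) {x : ι → ℕ}
    (hx : ∀ i, (x i).Prime) {X : ℝ} (hX : 1 ≤ X) (hxX : ∀ i, (x i : ℝ) ≤ X) (a b : ℝ) :
    |∫ t in a..b, ∏ i, Real.cos (t * Real.log (x i))| ≤ 2 * X ^ Fintype.card ι := by
  have h := abs_integral_prod_cos_mul_le _ (by positivity)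
    (one_div_pow_le_abs_sum_log_sub_sum_log hι hx hX hxX) a b
  rwa [div_div_eq_mul_div, div_one] at h

end

theorem abs_integral_sum_mul_cos_mul_log_pow_le {k : ℕ} (hk : Odd k) {P : Finset ℕ}
    {X : ℝ} (hX : 1 ≤ X) (hP : ∀ p ∈ P, p.Prime ∧ (p : ℝ) ≤ X) {c : ℕ → ℝ}
    (hc : ∀ p ∈ P, |c p| ≤ 1) (a b : ℝ) :
    |∫ t in a..b, (∑ p ∈ P, c p * Real.cos (t * Real.log p)) ^ k| ≤ #P ^ k * (2 * X ^ k) := by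
  simp only [sum_pow', prod_mul_distrib]
  rw [intervalIntegral.integral_finsetSum fun _ _ =>
    (by fun_prop : Continuous _).intervalIntegrable _ _]
  calc _ ≤ ∑ y ∈ Fintype.piFinset fun _ : Fin k => P,
        |∫ t in a..b, (∏ i, c (y i)) * ∏ i, Real.cos (t * Real.log (y i))| :=
          abs_sum_le_sum_abs _ _
    _ ≤ ∑ _y ∈ Fintype.piFinset fun _ : Fin k => P, 1 * (2 * X ^ k) := by
        gcongr with y hy
        have hyP : ∀ i, y i ∈ P := Fintype.mem_piFinset.mp hy
        rw [intervalIntegral.integral_const_mul, abs_mul, abs_prod]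
        gcongr
        · exact prod_le_one (fun _ _ => abs_nonneg _) fun i _ => hc _ (hyP i)
        · simpa using abs_integral_prod_cos_mul_log_le (by simpa using hk)
            (fun i => (hP _ (hyP i)).1) hX (fun i => (hP _ (hyP i)).2) a b
    _ = #P ^ k * (2 * X ^ k) := by simp

theorem re_natCast_cpow_neg {n : ℕ} (hn : n ≠ 0) (σ t : ℝ) :
    ((n : ℂ) ^ (-((σ : ℂ) + t * I))).re = (n : ℝ) ^ (-σ) * Real.cos (t * Real.log n) := by
  rw [cpow_def_of_ne_zero (Nat.cast_ne_zero.mpr hn), ← natCast_log, exp_re,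
    Real.rpow_def_of_pos (Nat.cast_pos.mpr (Nat.pos_of_ne_zero hn)), ← Real.cos_neg]
  congr 2 <;>
    simp only [neg_add, mul_re, mul_im, neg_re, neg_im, add_re, add_im, ofReal_re, ofReal_im,
      I_re, I_im] <;>
    ring

theorem card_filter_prime_range_succ_le (n : ℕ) : #{p ∈ range (n + 1) | p.Prime} ≤ n := by
  calc #{p ∈ range (n + 1) | p.Prime} ≤ #(Icc 1 n) := by
        refine card_le_card fun p hp => ?_
        simp only [mem_filter, mem_range, mem_Icc] at hp ⊢
        exact ⟨hp.2.one_lt.le, Nat.lt_succ_iff.mp hp.1⟩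
    _ = n := by simp

/-- Odd moments of the real part of the prime Dirichlet polynomial are small:
for `τ` uniform on `[T, 2T]`, `σ₀ = 1/2 + 1/log T`, `X ≥ 2` with `X^{2k} ≤ √T` and `k` odd,
`E[(Re Σ_{p ≤ X} p^{-(σ₀+iτ)})^k] = O(X^{2k}/T)`. -/
theorem odd_moments_prime_sum :
    ∃ C > 0, ∀ T : ℝ, 2 ≤ T → ∀ X : ℝ, 2 ≤ X → ∀ k : ℕ, Odd k →
      X ^ (2 * k) ≤ Real.sqrt T →
      |(1 / T) * ∫ t in T..(2 * T),
          ((∑ p ∈ Finset.filter Nat.Prime (Finset.range (⌊X⌋₊ + 1)),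
            (p : ℂ) ^ (-(((1 / 2 + 1 / Real.log T : ℝ) : ℂ) + t * Complex.I))).re) ^ k|
        ≤ C * X ^ (2 * k) / T := by
  refine ⟨2, two_pos, fun T hT X hX k hk _ => ?_⟩
  set σ : ℝ := 1 / 2 + 1 / Real.log T
  set P := Finset.filter Nat.Prime (Finset.range (⌊X⌋₊ + 1))
  have hσ : 0 ≤ σ := by have := Real.log_pos (by linarith : (1 : ℝ) < T); positivity
  have hP : ∀ p ∈ P, p.Prime ∧ (p : ℝ) ≤ X := fun p hp => by
    simp only [P, mem_filter, mem_range] at hp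
    exact ⟨hp.2, (Nat.cast_le.mpr (Nat.lt_succ_iff.mp hp.1)).trans (Nat.floor_le (by linarith))⟩
  have hcardP : (#P : ℝ) ≤ X :=
    (Nat.cast_le.mpr (card_filter_prime_range_succ_le _)).trans (Nat.floor_le (by linarith))
  have hc : ∀ p ∈ P, |(p : ℝ) ^ (-σ)| ≤ 1 := fun p hp => by
    rw [abs_of_nonneg (by positivity)]
    exact Real.rpow_le_one_of_one_le_of_nonpos (by exact_mod_cast (hP p hp).1.one_lt.le)
      (neg_nonpos.mpr hσ)
  have hre (t : ℝ) : (∑ p ∈ P, (p : ℂ) ^ (-((σ : ℂ) + t * I))).re =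
      ∑ p ∈ P, (p : ℝ) ^ (-σ) * Real.cos (t * Real.log p) := by
    rw [re_sum]
    exact sum_congr rfl fun p hp => re_natCast_cpow_neg (hP p hp).1.ne_zero σ t
  have hmoment := abs_integral_sum_mul_cos_mul_log_pow_le hk (by linarith) hP hc T (2 * T)
  simp only [hre, abs_mul, abs_one_div, abs_of_pos (by linarith : 0 < T)]
  calc 1 / T * |∫ t in T..2 * T, (∑ p ∈ P, (p : ℝ) ^ (-σ) * Real.cos (t * Real.log p)) ^ k|
      ≤ 1 / T * (X ^ k * (2 * X ^ k)) := by gcongr; exact hmoment.trans (by gcongr)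
    _ = 2 * X ^ (2 * k) / T := by ring
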